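/- The centralizer algebra of the image of (S_m)ⁿ acting on (V₁⊗⋯⊗Vₙ)^{⊗m} by permuting each i-th tensor slot independently equals the span of the image of GL(V₁)×⋯×GL(Vₙ) under μ(g₁,…,gₙ) = (g₁^{⊗m})⊗⋯⊗(gₙ^{⊗m}) (up to the canonical reshuffling isomorphism). -/

import Mathlib

open scoped Classical

/-- The matrix of `μ(g₁,…,gₙ) = (g₁^{⊗m})⊗⋯⊗(gₙ^{⊗m})` (up to the canonical reshuffling)
acting on `V^{⊗m} = (V₁⊗⋯⊗Vₙ)^{⊗m}`, with basis indexed by `Fin m → ∀ i, Fin (d i)`. -/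
noncomputable def muMat {k : Type*} [Field k] {n m : ℕ} {d : Fin n → ℕ}
    (g : ∀ i, Matrix (Fin (d i)) (Fin (d i)) k) :
    Matrix (Fin m → ∀ i, Fin (d i)) (Fin m → ∀ i, Fin (d i)) k :=
  fun a b => ∏ j, ∏ i, g i (a j i) (b j i)

/-- The matrix of `ρ(σ₁,…,σₙ)`, permuting the `m` slots of the `i`-th tensor factor
independently: `ρ(σ)(⊗ᵢ⊗ⱼ v_{ij}) = ⊗ᵢ⊗ⱼ v_{i σᵢ⁻¹(j)}`. -/
noncomputable def rhoMat {k : Type*} [Field k] {n m : ℕ} {d : Fin n → ℕ}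
    (σ : Fin n → Equiv.Perm (Fin m)) :
    Matrix (Fin m → ∀ i, Fin (d i)) (Fin m → ∀ i, Fin (d i)) k :=
  fun b a => if ∀ j i, b j i = a ((σ i)⁻¹ j) i then 1 else 0

/-!
Commuting with every `ρ(σ)` means that the entries of `X` are invariant under the diagonal action
of `(S_m)ⁿ` on pairs of basis indices, so in characteristic zero averaging over the group writes
`X` as a combination of orbit sums. An orbit sum factors over `i` into permanents of sums of
elementary matrices, and Ryser's inclusion–exclusion formula for the permanent turns it into a
signed sum of matrices `μ(h₁,…,hₙ)` with arbitrary `hᵢ`. Finally the entries of `μ(h + t • 1)` are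
polynomials in `t` of degree at most `mn`, and `h + t • 1` is invertible for all but finitely many
`t`, so Lagrange interpolation at `mn + 1` such nodes writes `μ(h)` as a combination of `μ(g)` with
every `gᵢ` invertible.
-/

open Finset

theorem Finset.sum_disjoint_neg_one_pow_card {α R : Type*} [Fintype α] [DecidableEq α]
    [CommRing R] (s : Finset α) :
    ∑ t with Disjoint t s, (-1 : R) ^ #t = if s = univ then 1 else 0 := by
  have hfilter : ({t | Disjoint t s} : Finset (Finset α)) = sᶜ.powerset := by
    ext t
    simp [subset_compl_iff_disjoint_right]
  have h := congrArg (Int.cast : ℤ → R) (sum_powerset_neg_one_pow_card (x := sᶜ))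
  push_cast at h
  simp only [hfilter, h, compl_eq_empty_iff]

theorem Matrix.permanent_eq_ryser {n R : Type*} [Fintype n] [DecidableEq n] [CommRing R]
    (A : Matrix n n R) :
    A.permanent = ∑ t : Finset n, (-1) ^ #t * ∏ i, ∑ j ∈ tᶜ, A i j := by
  have hexpand (t : Finset n) : ∏ i, ∑ j ∈ tᶜ, A i j =
      ∑ f : n → n, if Disjoint t (univ.image f) then ∏ i, A i (f i) else 0 := by
    rw [prod_univ_sum (fun _ => tᶜ) (fun i j => A i j), ← sum_filter]
    congr 1
    ext f
    simp [Fintype.mem_piFinset, disjoint_right]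
  have himage (f : n → n) : univ.image f = univ ↔ Function.Surjective f := by
    simp [eq_univ_iff_forall, Function.Surjective]
  calc A.permanent = ∑ σ : Equiv.Perm n, ∏ i, A i (σ i) := by
        rw [← permanent_transpose]; rfl
    _ = ∑ f : n → n, if Function.Surjective f then ∏ i, A i (f i) else 0 := by
        have hperm : (univ : Finset (Equiv.Perm n)).map ⟨_, DFunLike.coe_injective⟩ =
            ({f | Function.Surjective f} : Finset (n → n)) := by
          ext f
          simp only [mem_map, mem_univ, true_and, mem_filter, Function.Embedding.coeFn_mk]
          exact ⟨fun ⟨σ, hσ⟩ => hσ ▸ σ.surjective,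
            fun hf => ⟨Equiv.ofBijective f hf.bijective_of_finite, rfl⟩⟩
        rw [← sum_filter, ← hperm, sum_map]
        rfl
    _ = ∑ f : n → n, (∏ i, A i (f i)) *
          ∑ t with Disjoint t (univ.image f), (-1 : R) ^ #t := by
        simp_rw [sum_disjoint_neg_one_pow_card, himage, mul_ite, mul_one, mul_zero]
    _ = _ := by
        simp_rw [hexpand, mul_sum, sum_filter, mul_ite, mul_zero, mul_comm]
        exact sum_comm

open Polynomial in
theorem Matrix.map_eval_mem_span_map_eval {α β k : Type*} [Field k] (P : Matrix α β k[X])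
    {N : ℕ} (hP : ∀ a b, (P a b).natDegree ≤ N) {A : Set k} (hA : A.Infinite) (x : k) :
    P.map (eval x) ∈ Submodule.span k ((fun t => P.map (eval t)) '' A) := by
  obtain ⟨s, hsA, hs⟩ := hA.exists_subset_card_eq (N + 1)
  have hinterp : P.map (eval x) = ∑ t ∈ s, (Lagrange.basis s id t).eval x • P.map (eval t) := by
    ext a b
    have hdeg : (P a b).degree < s.card := by
      rw [hs]
      exact (degree_le_of_natDegree_le (hP a b)).trans_lt (by exact_mod_cast N.lt_succ_self)
    rw [Matrix.map_apply, Lagrange.eq_interpolate (Set.injOn_id _) hdeg]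
    simp [Lagrange.interpolate_apply, eval_finsetSum, Matrix.sum_apply, mul_comm]
  rw [hinterp]
  exact Submodule.sum_mem _ fun t ht =>
    Submodule.smul_mem _ _ (Submodule.subset_span ⟨t, hsA ht, rfl⟩)

section

variable {k : Type*} [Field k] {n m : ℕ} {d : Fin n → ℕ}

def slotPerm (σ : Fin n → Equiv.Perm (Fin m)) : Equiv.Perm (Fin m → ∀ i, Fin (d i)) where
  toFun a j i := a ((σ i)⁻¹ j) i
  invFun a j i := a (σ i j) i
  left_inv a := by simp
  right_inv a := by simp

theorem rhoMat_eq_toMatrix (σ : Fin n → Equiv.Perm (Fin m)) :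
    (rhoMat σ : Matrix (Fin m → ∀ i, Fin (d i)) _ k) =
      (slotPerm σ).symm.toPEquiv.toMatrix := by
  ext b a
  simp only [rhoMat, PEquiv.toMatrix_apply, Equiv.toPEquiv_apply, Option.mem_def,
    Option.some_inj]
  refine if_congr ?_ rfl rfl
  simp only [funext_iff, Equiv.symm_apply_eq, slotPerm, Equiv.coe_fn_mk]

theorem commute_rhoMat_iff (σ : Fin n → Equiv.Perm (Fin m))
    (X : Matrix (Fin m → ∀ i, Fin (d i)) (Fin m → ∀ i, Fin (d i)) k) :
    X * rhoMat σ = rhoMat σ * X ↔ X.submatrix (slotPerm σ) (slotPerm σ) = X := by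
  rw [rhoMat_eq_toMatrix, PEquiv.mul_toMatrix_toPEquiv, PEquiv.toMatrix_toPEquiv_mul,
    Equiv.symm_symm]
  simp only [← Matrix.ext_iff, Matrix.submatrix_apply, id]
  exact ⟨fun h a b => by simpa using h (slotPerm σ a) b,
    fun h a b => by simpa using h ((slotPerm σ).symm a) b⟩

theorem muMat_submatrix_slotPerm (σ : Fin n → Equiv.Perm (Fin m))
    (g : ∀ i, Matrix (Fin (d i)) (Fin (d i)) k) :
    (muMat g).submatrix (slotPerm σ) (slotPerm σ) = muMat g := by
  ext a b
  simp only [Matrix.submatrix_apply, muMat]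
  rw [prod_comm, prod_comm (γ := Fin m)]
  refine prod_congr rfl fun i _ => ?_
  exact Fintype.prod_equiv (σ i)⁻¹ _ _ fun j => rfl

noncomputable def orbitMat (a b : Fin m → ∀ i, Fin (d i)) :
    Matrix (Fin m → ∀ i, Fin (d i)) (Fin m → ∀ i, Fin (d i)) k :=
  ∑ σ : Fin n → Equiv.Perm (Fin m), Matrix.single (slotPerm σ a) (slotPerm σ b) 1

theorem card_smul_eq_sum_orbitMat
    {X : Matrix (Fin m → ∀ i, Fin (d i)) (Fin m → ∀ i, Fin (d i)) k}
    (hX : ∀ σ, X.submatrix (slotPerm σ) (slotPerm σ) = X) :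
    (Fintype.card (Fin n → Equiv.Perm (Fin m)) : k) • X = ∑ a, ∑ b, X a b • orbitMat a b := by
  have hσ (σ : Fin n → Equiv.Perm (Fin m)) :
      X = ∑ a, ∑ b, X a b • Matrix.single (slotPerm σ a) (slotPerm σ b) (1 : k) := by
    conv_lhs => rw [Matrix.matrix_eq_sum_single X, ← Equiv.sum_comp (slotPerm σ)]
    simp_rw [← Equiv.sum_comp (slotPerm σ) (fun b => Matrix.single _ b _), Matrix.smul_single,
      smul_eq_mul, mul_one]
    refine sum_congr rfl fun a _ => sum_congr rfl fun b _ => ?_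
    rw [← congrFun (congrFun (hX σ) a) b]
    rfl
  calc (Fintype.card (Fin n → Equiv.Perm (Fin m)) : k) • X
      = ∑ σ : Fin n → Equiv.Perm (Fin m), X := by
        rw [sum_const, card_univ, Nat.cast_smul_eq_nsmul]
    _ = ∑ σ : Fin n → Equiv.Perm (Fin m), ∑ a, ∑ b,
          X a b • Matrix.single (slotPerm σ a) (slotPerm σ b) (1 : k) :=
        sum_congr rfl fun σ _ => hσ σ
    _ = _ := by
        simp_rw [orbitMat, smul_sum]
        rw [sum_comm]
        exact sum_congr rfl fun a _ => sum_comm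

theorem orbitMat_eq_sum_muMat (a b : Fin m → ∀ i, Fin (d i)) :
    (orbitMat a b : Matrix (Fin m → ∀ i, Fin (d i)) (Fin m → ∀ i, Fin (d i)) k) =
      ∑ t : Fin n → Finset (Fin m), (∏ i, (-1 : k) ^ #(t i)) •
        muMat (fun i => ∑ s ∈ (t i)ᶜ, Matrix.single (a s i) (b s i) 1) := by
  set E : ∀ i, Fin m → Matrix (Fin (d i)) (Fin (d i)) k :=
    fun i s => Matrix.single (a s i) (b s i) 1
  ext x y
  have hfactor (σ : Fin n → Equiv.Perm (Fin m)) :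
      Matrix.single (slotPerm σ a) (slotPerm σ b) (1 : k) x y =
        ∏ i, ∏ j, E i ((σ i)⁻¹ j) (x j i) (y j i) := by
    simp only [E, Matrix.single_apply, prod_boole, mem_univ, true_implies]
    refine if_congr ?_ rfl rfl
    simp only [funext_iff, slotPerm, Equiv.coe_fn_mk, forall_and]
    exact and_congr forall_comm forall_comm
  have hryser (i : Fin n) :
      ∑ τ : Equiv.Perm (Fin m), ∏ j, E i (τ⁻¹ j) (x j i) (y j i) =
        ∑ t : Finset (Fin m), (-1) ^ #t * ∏ j, (∑ s ∈ tᶜ, E i s) (x j i) (y j i) := by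
    rw [← Equiv.sum_comp (Equiv.inv (Equiv.Perm (Fin m)))]
    simp only [Equiv.inv_apply, inv_inv, Matrix.sum_apply]
    exact (Matrix.permanent_transpose _).symm.trans
      (Matrix.permanent_eq_ryser (Matrix.of fun j s => E i s (x j i) (y j i)))
  calc orbitMat a b x y
      = ∑ σ : Fin n → Equiv.Perm (Fin m), ∏ i, ∏ j, E i ((σ i)⁻¹ j) (x j i) (y j i) := by
        simp only [orbitMat, Matrix.sum_apply, hfactor]
    _ = ∏ i, ∑ τ : Equiv.Perm (Fin m), ∏ j, E i (τ⁻¹ j) (x j i) (y j i) := by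
        rw [Fintype.prod_sum]
    _ = ∏ i, ∑ t : Finset (Fin m), (-1) ^ #t * ∏ j, (∑ s ∈ tᶜ, E i s) (x j i) (y j i) :=
        prod_congr rfl fun i _ => hryser i
    _ = ∑ t : Fin n → Finset (Fin m),
          ∏ i, ((-1) ^ #(t i) * ∏ j, (∑ s ∈ (t i)ᶜ, E i s) (x j i) (y j i)) :=
        Fintype.prod_sum _
    _ = _ := by
        simp only [Matrix.sum_apply, Matrix.smul_apply, muMat, smul_eq_mul]
        refine sum_congr rfl fun t _ => ?_
        rw [prod_mul_distrib, prod_comm (s := univ (α := Fin n))]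

open Polynomial in
theorem muMat_mem_span_isUnit [Infinite k]
    (g : ∀ i, Matrix (Fin (d i)) (Fin (d i)) k) :
    (muMat g : Matrix (Fin m → ∀ i, Fin (d i)) (Fin m → ∀ i, Fin (d i)) k) ∈ Submodule.span k
      {Y | ∃ g : ∀ i, Matrix (Fin (d i)) (Fin (d i)) k, (∀ i, IsUnit (g i)) ∧ Y = muMat g} := by
  let P : Matrix (Fin m → ∀ i, Fin (d i)) (Fin m → ∀ i, Fin (d i)) k[X] :=
    fun a b => ∏ j, ∏ i, Matrix.charmatrix (-g i) (a j i) (b j i)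
  have hP (t : k) : P.map (eval t) = muMat (fun i => Matrix.scalar _ t + g i) := by
    ext a b
    rw [Matrix.map_apply]
    simp only [P, muMat, eval_prod]
    refine prod_congr rfl fun j _ => prod_congr rfl fun i _ => ?_
    by_cases h : a j i = b j i
    · simp [h]
    · simp [h, Matrix.charmatrix_apply_ne]
  have hdeg (a b) : (P a b).natDegree ≤ m * n := by
    calc (P a b).natDegree
        ≤ ∑ j, ∑ i, (Matrix.charmatrix (-g i) (a j i) (b j i)).natDegree :=
          (natDegree_prod_le _ _).trans (sum_le_sum fun j _ => natDegree_prod_le _ _)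
      _ ≤ ∑ _j : Fin m, ∑ _i : Fin n, 1 := by
          gcongr with j _ i
          exact (Matrix.charmatrix_apply_natDegree_le _ _).trans (by split_ifs <;> simp)
      _ = m * n := by simp
  have hbad : {t : k | ∃ i, ((-g i).charpoly).IsRoot t}.Finite := by
    simp only [Set.ofPred_exists]
    exact Set.finite_iUnion fun i => finite_setOfPred_isRoot (Matrix.charpoly_monic _).ne_zero
  have hmem := P.map_eval_mem_span_map_eval hdeg hbad.infinite_compl 0
  simp only [hP, map_zero, zero_add] at hmem
  refine Submodule.span_mono ?_ hmem
  rintro _ ⟨t, ht, rfl⟩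
  refine ⟨_, fun i => ?_, rfl⟩
  rw [Matrix.isUnit_iff_isUnit_det, isUnit_iff_ne_zero, ← sub_neg_eq_add, ← Matrix.eval_charpoly]
  exact fun hroot => ht ⟨i, hroot⟩

theorem submatrix_slotPerm_of_mem_span {σ : Fin n → Equiv.Perm (Fin m)}
    {X : Matrix (Fin m → ∀ i, Fin (d i)) (Fin m → ∀ i, Fin (d i)) k}
    (hX : X ∈ Submodule.span k {Y | ∃ g : ∀ i, Matrix (Fin (d i)) (Fin (d i)) k,
      (∀ i, IsUnit (g i)) ∧ Y = muMat g}) :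
    X.submatrix (slotPerm σ) (slotPerm σ) = X := by
  induction hX using Submodule.span_induction with
  | mem Y hY =>
    obtain ⟨g, -, rfl⟩ := hY
    exact muMat_submatrix_slotPerm σ g
  | zero => rfl
  | add Y Z _ _ hY hZ => exact congrArg₂ (· + ·) hY hZ
  | smul c Y _ hY => exact congrArg (c • ·) hY

end

theorem stmt_8_general {k : Type*} [Field k] [CharZero k] {n m : ℕ}
    (d : Fin n → ℕ) (X : Matrix (Fin m → ∀ i, Fin (d i)) (Fin m → ∀ i, Fin (d i)) k) :
    (∀ σ : Fin n → Equiv.Perm (Fin m), X * rhoMat σ = rhoMat σ * X) ↔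
    X ∈ Submodule.span k
      {Y | ∃ g : ∀ i, Matrix (Fin (d i)) (Fin (d i)) k, (∀ i, IsUnit (g i)) ∧ Y = muMat g} := by
  simp only [commute_rhoMat_iff]
  refine ⟨fun hX => ?_, fun hX σ => submatrix_slotPerm_of_mem_span hX⟩
  have hcard : (Fintype.card (Fin n → Equiv.Perm (Fin m)) : k) ≠ 0 :=
    Nat.cast_ne_zero.mpr Fintype.card_ne_zero
  rw [← inv_smul_smul₀ hcard X, card_smul_eq_sum_orbitMat hX]
  refine Submodule.smul_mem _ _ (Submodule.sum_mem _ fun a _ =>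
    Submodule.sum_mem _ fun b _ => Submodule.smul_mem _ _ ?_)
  rw [orbitMat_eq_sum_muMat]
  exact Submodule.sum_mem _ fun t _ => Submodule.smul_mem _ _ (muMat_mem_span_isUnit _)

/-- The centralizer algebra of the image of `(S_m)ⁿ` acting on
`(V₁⊗⋯⊗Vₙ)^{⊗m}` by permuting each tensor slot independently equals the span of the image
of `GL(V₁)×⋯×GL(Vₙ)` under `μ`. -/
theorem stmt_8 {k : Type*} [Field k] [IsAlgClosed k] [CharZero k] {n m : ℕ}
    (d : Fin n → ℕ) (X : Matrix (Fin m → ∀ i, Fin (d i)) (Fin m → ∀ i, Fin (d i)) k) :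
    (∀ σ : Fin n → Equiv.Perm (Fin m), X * rhoMat σ = rhoMat σ * X) ↔
    X ∈ Submodule.span k
      {Y | ∃ g : ∀ i, Matrix (Fin (d i)) (Fin (d i)) k, (∀ i, IsUnit (g i)) ∧ Y = muMat g} :=
  stmt_8_general d X
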